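/- The function h_p(x) = (1-x)^p · K(x) is strictly decreasing on (0,1) if and only if p ≥ 1/4, and strictly increasing on (0,1) if and only if p ≤ 0. -/

import Mathlib

open Real Set Filter

noncomputable def K (x : ℝ) : ℝ :=
  ∫ t in (0 : ℝ)..(π / 2), (1 - x * Real.sin t ^ 2) ^ (-(1/2) : ℝ)

noncomputable def E (x : ℝ) : ℝ :=
  ∫ t in (0 : ℝ)..(π / 2), (1 - x * Real.sin t ^ 2) ^ ((1/2) : ℝ)

/-!
Write `σ = 1 - x sin² t`. Integrating by parts against `d/dt (sin t cos t σ^(-1/2))` gives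
`(1 - x) K'(x) = Kcos(x) / 2` with `Kcos(x) = ∫ cos² t σ^(-1/2) dt`, so
`h_p'(x) = (1 - x)^(p - 1) (Kcos(x) / 2 - p K(x))` and the sign of `h_p'` is that of
`Kcos / (2K) - p`. The same integration by parts shows `2 Kcos < K`, so the ratio stays below
`1/4`; the bounds `π/4 ≤ Kcos ≤ 1`, `K ≤ π / (2 √(1 - x))` and `K ≥ -log(1 - x) / 2` show that it
tends to `1/4` as `x → 0` and to `0` as `x → 1`.
-/

open Topology MeasureTheory

section Integrand

variable {x : ℝ}

lemma one_sub_mul_sin_sq_eq (x t : ℝ) :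
    1 - x * sin t ^ 2 = cos t ^ 2 + (1 - x) * sin t ^ 2 := by
  linear_combination -(sin_sq_add_cos_sq t)

lemma min_le_one_sub_mul_sin_sq (x t : ℝ) : min 1 (1 - x) ≤ 1 - x * sin t ^ 2 := by
  rw [one_sub_mul_sin_sq_eq]
  have := sin_sq_add_cos_sq t
  rcases le_total 1 (1 - x) with h | h
  · rw [min_eq_left h]; nlinarith [sq_nonneg (sin t)]
  · rw [min_eq_right h]; nlinarith [sq_nonneg (cos t)]

lemma one_sub_mul_sin_sq_pos (hx : x < 1) (t : ℝ) : 0 < 1 - x * sin t ^ 2 :=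
  (lt_min one_pos (sub_pos.2 hx)).trans_le (min_le_one_sub_mul_sin_sq x t)

lemma continuous_one_sub_mul_sin_sq_rpow (hx : x < 1) (r : ℝ) :
    Continuous fun t => (1 - x * sin t ^ 2) ^ r :=
  (by fun_prop : Continuous fun t => 1 - x * sin t ^ 2).rpow_const
    fun t => Or.inl (one_sub_mul_sin_sq_pos hx t).ne'

lemma intervalIntegrable_mul_one_sub_mul_sin_sq_rpow {g : ℝ → ℝ} (hg : Continuous g)
    (hx : x < 1) (r a b : ℝ) :
    IntervalIntegrable (fun t => g t * (1 - x * sin t ^ 2) ^ r) volume a b :=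
  (hg.mul (continuous_one_sub_mul_sin_sq_rpow hx r)).intervalIntegrable a b

lemma rpow_neg_half_eq_mul_rpow_neg_three_halves {y : ℝ} (hy : 0 ≤ y) :
    y ^ (-(1/2) : ℝ) = y * y ^ (-(3/2) : ℝ) := by
  rw [← rpow_one_add' hy (by norm_num)]
  norm_num

lemma rpow_neg_half_eq_inv_sqrt {y : ℝ} (hy : 0 ≤ y) : y ^ (-(1/2) : ℝ) = (√y)⁻¹ := by
  rw [rpow_neg hy, sqrt_eq_rpow]

end Integrand

section Derivative

variable {x : ℝ}

noncomputable def Kderiv (x : ℝ) : ℝ :=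
  ∫ t in (0 : ℝ)..(π / 2), sin t ^ 2 / 2 * (1 - x * sin t ^ 2) ^ (-(3/2) : ℝ)

lemma K_pos (hx : x < 1) : 0 < K x :=
  intervalIntegral.intervalIntegral_pos_of_pos
    ((continuous_one_sub_mul_sin_sq_rpow hx _).intervalIntegrable _ _)
    (fun t => rpow_pos_of_pos (one_sub_mul_sin_sq_pos hx t) _) (by positivity)

lemma hasDerivAt_one_sub_mul_sin_sq_rpow_neg_half {y : ℝ} (hy : y < 1) (t : ℝ) :
    HasDerivAt (fun z => (1 - z * sin t ^ 2) ^ (-(1/2) : ℝ))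
      (sin t ^ 2 / 2 * (1 - y * sin t ^ 2) ^ (-(3/2) : ℝ)) y := by
  have hlin : HasDerivAt (fun z => 1 - z * sin t ^ 2) (-sin t ^ 2) y := by
    simpa using ((hasDerivAt_id y).mul_const (sin t ^ 2)).const_sub 1
  convert hlin.rpow_const (p := -(1/2)) (Or.inl (one_sub_mul_sin_sq_pos hy t).ne') using 1
  rw [show (-(1/2) : ℝ) - 1 = -(3/2) by norm_num]
  ring

lemma hasDerivAt_K (hx : x < 1) : HasDerivAt K (Kderiv x) x := by
  set δ := min 1 ((1 - x) / 2)
  have hδ : 0 < δ := lt_min one_pos (by linarith)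
  have hball : ∀ y ∈ Metric.ball x ((1 - x) / 2), y < 1 ∧ ∀ t, δ ≤ 1 - y * sin t ^ 2 := by
    intro y hy
    have hy' : y < x + (1 - x) / 2 := by
      rw [Metric.mem_ball, dist_eq] at hy; linarith [le_abs_self (y - x)]
    refine ⟨by linarith, fun t => le_trans ?_ (min_le_one_sub_mul_sin_sq y t)⟩
    exact min_le_min le_rfl (by linarith)
  have hderiv := intervalIntegral.hasDerivAt_integral_of_dominated_loc_of_deriv_le
    (μ := volume) (a := 0) (b := π / 2)
    (F := fun y t => (1 - y * sin t ^ 2) ^ (-(1/2) : ℝ))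
    (F' := fun y t => sin t ^ 2 / 2 * (1 - y * sin t ^ 2) ^ (-(3/2) : ℝ))
    (bound := fun _ => δ ^ (-(3/2) : ℝ) / 2)
    (Metric.ball_mem_nhds x (by linarith : 0 < (1 - x) / 2))
    (Eventually.of_forall fun y => (by fun_prop : Measurable _).aestronglyMeasurable)
    ((continuous_one_sub_mul_sin_sq_rpow hx _).intervalIntegrable _ _)
    (by fun_prop : Measurable _).aestronglyMeasurable
    (Eventually.of_forall fun t _ y hy => ?_) intervalIntegrable_const
    (Eventually.of_forall fun t _ y hy =>
      hasDerivAt_one_sub_mul_sin_sq_rpow_neg_half (hball y hy).1 t)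
  · exact hderiv.2
  · obtain ⟨-, hσ⟩ := hball y hy
    have hpow : (1 - y * sin t ^ 2) ^ (-(3/2) : ℝ) ≤ δ ^ (-(3/2) : ℝ) :=
      rpow_le_rpow_of_nonpos hδ (hσ t) (by norm_num)
    rw [norm_mul, norm_of_nonneg (by positivity),
      norm_of_nonneg (rpow_nonneg (hδ.le.trans (hσ t)) _)]
    nlinarith [sin_sq_le_one t, sq_nonneg (sin t), rpow_nonneg (hδ.le.trans (hσ t)) (-(3/2) : ℝ)]

end Derivative

section Identities

variable {x : ℝ}

-- `x * Kcos x = E x - (1 - x) * K x`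
noncomputable def Kcos (x : ℝ) : ℝ :=
  ∫ t in (0 : ℝ)..(π / 2), cos t ^ 2 * (1 - x * sin t ^ 2) ^ (-(1/2) : ℝ)

lemma hasDerivAt_sin_mul_cos_mul_rpow (hx : x < 1) (t : ℝ) :
    HasDerivAt (fun t => sin t * cos t * (1 - x * sin t ^ 2) ^ (-(1/2) : ℝ))
      ((1 - 2 * sin t ^ 2 + x * sin t ^ 4) * (1 - x * sin t ^ 2) ^ (-(3/2) : ℝ)) t := by
  have hσ := one_sub_mul_sin_sq_pos hx t
  have hσ' : HasDerivAt (fun t => 1 - x * sin t ^ 2) (-(x * (2 * sin t ^ 1 * cos t))) t :=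
    (((hasDerivAt_sin t).pow 2).const_mul x).const_sub 1
  refine (((hasDerivAt_sin t).mul (hasDerivAt_cos t)).mul
    (hσ'.rpow_const (p := -(1/2)) (Or.inl hσ.ne'))).congr_deriv ?_
  rw [Pi.mul_apply, show (-(1/2) : ℝ) - 1 = -(3/2) by norm_num,
    rpow_neg_half_eq_mul_rpow_neg_three_halves hσ.le]
  linear_combination (1 - x * sin t ^ 2) ^ (-(3/2) : ℝ) * cos_sq_add_sin_sq t

lemma integral_deriv_sin_mul_cos_mul_rpow_eq_zero (hx : x < 1) :
    ∫ t in (0 : ℝ)..(π / 2),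
      (1 - 2 * sin t ^ 2 + x * sin t ^ 4) * (1 - x * sin t ^ 2) ^ (-(3/2) : ℝ) = 0 := by
  rw [intervalIntegral.integral_eq_sub_of_hasDerivAt
    (fun t _ => hasDerivAt_sin_mul_cos_mul_rpow hx t)
    (intervalIntegrable_mul_one_sub_mul_sin_sq_rpow (by fun_prop) hx _ _ _)]
  simp

lemma one_sub_mul_Kderiv (hx : x < 1) : (1 - x) * Kderiv x = Kcos x / 2 := by
  have hdiff : (1 - x) * Kderiv x - Kcos x / 2 = ∫ t in (0 : ℝ)..(π / 2),
      -((1 - 2 * sin t ^ 2 + x * sin t ^ 4) * (1 - x * sin t ^ 2) ^ (-(3/2) : ℝ)) / 2 := by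
    rw [Kderiv, Kcos, ← intervalIntegral.integral_const_mul, ← intervalIntegral.integral_div,
      ← intervalIntegral.integral_sub
      ((intervalIntegrable_mul_one_sub_mul_sin_sq_rpow (by fun_prop) hx _ _ _).const_mul _)
      ((intervalIntegrable_mul_one_sub_mul_sin_sq_rpow (by fun_prop) hx _ _ _).div_const _)]
    refine intervalIntegral.integral_congr fun t _ => ?_
    rw [rpow_neg_half_eq_mul_rpow_neg_three_halves (one_sub_mul_sin_sq_pos hx t).le]
    linear_combination (-(1 - x * sin t ^ 2) ^ (-(3/2) : ℝ) / 2 * (1 - x * sin t ^ 2)) *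
      cos_sq_add_sin_sq t
  rw [intervalIntegral.integral_div, intervalIntegral.integral_neg,
    integral_deriv_sin_mul_cos_mul_rpow_eq_zero hx] at hdiff
  linarith

lemma two_mul_Kcos_lt_K (hx0 : 0 < x) (hx1 : x < 1) : 2 * Kcos x < K x := by
  have hdiff : K x - 2 * Kcos x = ∫ t in (0 : ℝ)..(π / 2),
      (x * (sin t ^ 2 * cos t ^ 2 * (1 - x * sin t ^ 2) ^ (-(3/2) : ℝ)) -
        (1 - 2 * sin t ^ 2 + x * sin t ^ 4) * (1 - x * sin t ^ 2) ^ (-(3/2) : ℝ)) := by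
    rw [K, Kcos, ← intervalIntegral.integral_const_mul, ← intervalIntegral.integral_sub
      ((continuous_one_sub_mul_sin_sq_rpow hx1 _).intervalIntegrable _ _)
      ((intervalIntegrable_mul_one_sub_mul_sin_sq_rpow (by fun_prop) hx1 _ _ _).const_mul _)]
    refine intervalIntegral.integral_congr fun t _ => ?_
    rw [rpow_neg_half_eq_mul_rpow_neg_three_halves (one_sub_mul_sin_sq_pos hx1 t).le]
    linear_combination ((1 - x * sin t ^ 2) ^ (-(3/2) : ℝ) * (x * sin t ^ 2 - 2)) *
      cos_sq_add_sin_sq t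
  have hpos : 0 < ∫ t in (0 : ℝ)..(π / 2),
      sin t ^ 2 * cos t ^ 2 * (1 - x * sin t ^ 2) ^ (-(3/2) : ℝ) := by
    refine intervalIntegral.intervalIntegral_pos_of_pos_on
      (intervalIntegrable_mul_one_sub_mul_sin_sq_rpow (by fun_prop) hx1 _ _ _)
      (fun t ht => ?_) (by positivity)
    have := sin_pos_of_pos_of_lt_pi ht.1 (by linarith [ht.2, pi_pos])
    have := cos_pos_of_mem_Ioo ⟨by linarith [ht.1, pi_pos], ht.2⟩
    have := rpow_pos_of_pos (one_sub_mul_sin_sq_pos hx1 t) (-(3/2) : ℝ)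
    positivity
  rw [intervalIntegral.integral_sub
    ((intervalIntegrable_mul_one_sub_mul_sin_sq_rpow (by fun_prop) hx1 _ _ _).const_mul _)
    (intervalIntegrable_mul_one_sub_mul_sin_sq_rpow (by fun_prop) hx1 _ _ _),
    intervalIntegral.integral_const_mul, integral_deriv_sin_mul_cos_mul_rpow_eq_zero hx1] at hdiff
  nlinarith

end Identities

section Bounds

variable {x : ℝ}

lemma pi_div_four_le_Kcos (hx0 : 0 ≤ x) (hx1 : x < 1) : π / 4 ≤ Kcos x := by
  have hle : ∫ t in (0 : ℝ)..(π / 2), cos t ^ 2 ≤ Kcos x := by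
    refine intervalIntegral.integral_mono_on (by positivity)
      ((continuous_cos.pow 2).intervalIntegrable _ _)
      (intervalIntegrable_mul_one_sub_mul_sin_sq_rpow (by fun_prop) hx1 _ _ _) fun t _ => ?_
    have hσ := one_sub_mul_sin_sq_pos hx1 t
    have hone : 1 ≤ (1 - x * sin t ^ 2) ^ (-(1/2) : ℝ) :=
      one_le_rpow_of_pos_of_le_one_of_nonpos hσ (by nlinarith [sq_nonneg (sin t)]) (by norm_num)
    nlinarith [sq_nonneg (cos t)]
  rw [integral_cos_sq] at hle
  norm_num at hle
  linarith

lemma Kcos_le_one (hx : x < 1) : Kcos x ≤ 1 := by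
  have hle : Kcos x ≤ ∫ t in (0 : ℝ)..(π / 2), cos t := by
    refine intervalIntegral.integral_mono_on (by positivity)
      (intervalIntegrable_mul_one_sub_mul_sin_sq_rpow (by fun_prop) hx _ _ _)
      (continuous_cos.intervalIntegrable _ _) fun t ht => ?_
    have hcos : 0 ≤ cos t := cos_nonneg_of_mem_Icc ⟨by linarith [ht.1, pi_pos], ht.2⟩
    have hσ := one_sub_mul_sin_sq_pos hx t
    have hsqrt : cos t ≤ √(1 - x * sin t ^ 2) :=
      le_sqrt_of_sq_le (by nlinarith [min_le_one_sub_mul_sin_sq x t, sin_sq_add_cos_sq t])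
    rw [rpow_neg_half_eq_inv_sqrt hσ.le, ← div_eq_mul_inv, div_le_iff₀ (sqrt_pos.2 hσ)]
    nlinarith
  simpa using hle

lemma K_le (hx0 : 0 ≤ x) (hx1 : x < 1) : K x ≤ π / 2 / √(1 - x) := by
  have hle : K x ≤ ∫ _ in (0 : ℝ)..(π / 2), (1 - x) ^ (-(1/2) : ℝ) :=
    intervalIntegral.integral_mono_on (by positivity)
      ((continuous_one_sub_mul_sin_sq_rpow hx1 _).intervalIntegrable _ _) intervalIntegrable_const
      fun t _ => rpow_le_rpow_of_nonpos (by linarith)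
        (by nlinarith [mul_le_mul_of_nonneg_left (sin_sq_le_one t) hx0]) (by norm_num)
  rwa [intervalIntegral.integral_const, smul_eq_mul, sub_zero,
    rpow_neg_half_eq_inv_sqrt (by linarith), ← div_eq_mul_inv] at hle

/-- With `c = √(1 - x)`: `1 - x sin² t ≤ (c + cos t)² ≤ (c + π/2 - t)²`, and the reciprocal of
the right-hand side integrates to `log ((c + π/2) / c) ≥ -log c`. -/
lemma neg_log_one_sub_div_two_le_K (hx : x < 1) : -log (1 - x) / 2 ≤ K x := by
  set c := √(1 - x)
  have hc : 0 < c := sqrt_pos.2 (by linarith)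
  have hc_sq : c ^ 2 = 1 - x := sq_sqrt (by linarith)
  have hcont : ContinuousOn (fun t => (c + π / 2 - t)⁻¹) (uIcc 0 (π / 2)) := by
    refine ContinuousOn.inv₀ (by fun_prop) fun t ht => ?_
    rw [uIcc_of_le (by positivity)] at ht
    linarith [ht.2]
  have hle : ∫ t in (0 : ℝ)..(π / 2), (c + π / 2 - t)⁻¹ ≤ K x := by
    refine intervalIntegral.integral_mono_on (by positivity) hcont.intervalIntegrable
      ((continuous_one_sub_mul_sin_sq_rpow hx _).intervalIntegrable _ _) fun t ht => ?_
    have hcos : 0 ≤ cos t := cos_nonneg_of_mem_Icc ⟨by linarith [ht.1, pi_pos], ht.2⟩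
    have hcos_le : cos t ≤ π / 2 - t := by
      simpa [sin_pi_div_two_sub] using sin_le (by linarith [ht.2] : 0 ≤ π / 2 - t)
    have hσ := one_sub_mul_sin_sq_pos hx t
    have hsqrt : √(1 - x * sin t ^ 2) ≤ c + cos t :=
      (sqrt_le_left (by positivity)).2 (by
        nlinarith [one_sub_mul_sin_sq_eq x t, sin_sq_le_one t, sq_nonneg (sin t)])
    rw [rpow_neg_half_eq_inv_sqrt hσ.le]
    exact inv_anti₀ (sqrt_pos.2 hσ) (by linarith)
  have hint : ∫ t in (0 : ℝ)..(π / 2), (c + π / 2 - t)⁻¹ = log ((c + π / 2) / c) := by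
    rw [intervalIntegral.integral_comp_sub_left (fun u => u⁻¹), sub_zero, add_sub_cancel_right,
      integral_inv]
    rw [uIcc_of_le (by linarith [pi_pos])]
    exact fun h => hc.not_ge h.1
  have hlog : -log (1 - x) / 2 ≤ log ((c + π / 2) / c) := by
    have hlog_c : log c = log (1 - x) / 2 := log_sqrt (by linarith)
    rw [log_div (by positivity) hc.ne']
    linarith [log_nonneg (by linarith [pi_gt_three] : 1 ≤ c + π / 2)]
  linarith

lemma tendsto_K_nhdsLT_one : Tendsto K (𝓝[<] 1) atTop := by
  have hsub : Tendsto (fun x : ℝ => 1 - x) (𝓝[<] 1) (𝓝[>] 0) := by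
    refine tendsto_nhdsWithin_iff.2 ⟨?_, ?_⟩
    · have : Tendsto (fun x : ℝ => 1 - x) (𝓝 1) (𝓝 (1 - 1)) := tendsto_const_nhds.sub tendsto_id
      simpa using this.mono_left nhdsWithin_le_nhds
    · filter_upwards [self_mem_nhdsWithin] with x hx using mem_Ioi.2 (sub_pos.2 hx)
  refine tendsto_atTop_mono' _ ?_
    ((tendsto_neg_atBot_atTop.comp (tendsto_log_nhdsGT_zero.comp hsub)).atTop_div_const two_pos)
  filter_upwards [self_mem_nhdsWithin] with x hx using neg_log_one_sub_div_two_le_K hx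

end Bounds

section Monotonicity

variable {p x : ℝ}

lemma hasDerivAt_one_sub_rpow_mul_K (p : ℝ) (hx : x < 1) :
    HasDerivAt (fun x => (1 - x) ^ p * K x) ((1 - x) ^ (p - 1) * (Kcos x / 2 - p * K x)) x := by
  have hx' : 0 < 1 - x := sub_pos.2 hx
  have hsub : HasDerivAt (fun x : ℝ => 1 - x) (-1) x := by
    simpa using (hasDerivAt_id x).const_sub 1
  refine ((hsub.rpow_const (p := p) (Or.inl hx'.ne')).mul (hasDerivAt_K hx)).congr_deriv ?_
  rw [← one_sub_mul_Kderiv hx, rpow_sub_one hx'.ne']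
  field_simp
  ring

lemma continuousOn_one_sub_rpow_mul_K (p : ℝ) :
    ContinuousOn (fun x => (1 - x) ^ p * K x) (Ioo 0 1) := fun _ hx =>
  (hasDerivAt_one_sub_rpow_mul_K p hx.2).continuousAt.continuousWithinAt

lemma strictAntiOn_one_sub_rpow_mul_K (hp : 1 / 4 ≤ p) :
    StrictAntiOn (fun x => (1 - x) ^ p * K x) (Ioo 0 1) := by
  refine strictAntiOn_of_deriv_neg (convex_Ioo 0 1) (continuousOn_one_sub_rpow_mul_K p)
    fun x hx => ?_
  rw [interior_Ioo] at hx
  rw [(hasDerivAt_one_sub_rpow_mul_K p hx.2).deriv]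
  refine mul_neg_of_pos_of_neg (rpow_pos_of_pos (sub_pos.2 hx.2) _) ?_
  nlinarith [two_mul_Kcos_lt_K hx.1 hx.2, K_pos hx.2]

lemma strictMonoOn_one_sub_rpow_mul_K (hp : p ≤ 0) :
    StrictMonoOn (fun x => (1 - x) ^ p * K x) (Ioo 0 1) := by
  refine strictMonoOn_of_deriv_pos (convex_Ioo 0 1) (continuousOn_one_sub_rpow_mul_K p)
    fun x hx => ?_
  rw [interior_Ioo] at hx
  rw [(hasDerivAt_one_sub_rpow_mul_K p hx.2).deriv]
  refine mul_pos (rpow_pos_of_pos (sub_pos.2 hx.2) _) ?_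
  nlinarith [pi_div_four_le_Kcos hx.1.le hx.2, K_pos hx.2, pi_pos]

lemma sqrt_one_sub_div_four_le_of_deriv_nonpos (hx : x ∈ Ioo 0 1)
    (hderiv : (1 - x) ^ (p - 1) * (Kcos x / 2 - p * K x) ≤ 0) : √(1 - x) / 4 ≤ p := by
  have hKcos : Kcos x / 2 ≤ p * K x :=
    sub_nonpos.1 (nonpos_of_mul_nonpos_right hderiv (rpow_pos_of_pos (sub_pos.2 hx.2) _))
  have hsqrt : 0 < √(1 - x) := sqrt_pos.2 (sub_pos.2 hx.2)
  have hK : K x * √(1 - x) ≤ π / 2 := (le_div_iff₀ hsqrt).1 (K_le hx.1.le hx.2)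
  have hp : 0 < p := by nlinarith [pi_div_four_le_Kcos hx.1.le hx.2, K_pos hx.2, pi_pos]
  nlinarith [pi_div_four_le_Kcos hx.1.le hx.2, pi_pos]

lemma one_quarter_le_of_strictAntiOn (h : StrictAntiOn (fun x => (1 - x) ^ p * K x) (Ioo 0 1)) :
    1 / 4 ≤ p := by
  have hbound : ∀ x ∈ Ioo (0 : ℝ) 1, √(1 - x) / 4 ≤ p := fun x hx =>
    sqrt_one_sub_div_four_le_of_deriv_nonpos hx
      ((hasDerivAt_one_sub_rpow_mul_K p hx.2).hasDerivWithinAt.nonpos_of_antitoneOn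
        (isOpen_Ioo.preperfect x hx) h.antitoneOn)
  have hlim : Tendsto (fun x : ℝ => √(1 - x) / 4) (𝓝[>] 0) (𝓝 (1 / 4)) := by
    have : Continuous fun x : ℝ => √(1 - x) / 4 := by fun_prop
    simpa using (this.tendsto 0).mono_left nhdsWithin_le_nhds
  exact le_of_tendsto hlim (eventually_of_mem (Ioo_mem_nhdsGT one_pos) hbound)

lemma nonpos_of_strictMonoOn (h : StrictMonoOn (fun x => (1 - x) ^ p * K x) (Ioo 0 1)) :
    p ≤ 0 := by
  by_contra! hp
  have hbound : ∀ x ∈ Ioo (0 : ℝ) 1, p * K x ≤ 1 / 2 := fun x hx => by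
    have hderiv := (hasDerivAt_one_sub_rpow_mul_K p hx.2).hasDerivWithinAt.nonneg_of_monotoneOn
      (isOpen_Ioo.preperfect x hx) h.monotoneOn
    have := nonneg_of_mul_nonneg_right hderiv (rpow_pos_of_pos (sub_pos.2 hx.2) _)
    linarith [Kcos_le_one hx.2]
  obtain ⟨x, hx, hlarge⟩ := ((eventually_of_mem (Ioo_mem_nhdsLT one_pos) fun x hx => hx).and
    ((tendsto_K_nhdsLT_one.const_mul_atTop hp).eventually_gt_atTop (1 / 2))).exists
  linarith [hbound x hx]

end Monotonicity

theorem stmt15 (p : ℝ) :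
    (StrictAntiOn (fun x : ℝ => (1 - x) ^ p * K x) (Ioo 0 1) ↔ p ≥ 1/4) ∧
    (StrictMonoOn (fun x : ℝ => (1 - x) ^ p * K x) (Ioo 0 1) ↔ p ≤ 0) :=
  ⟨⟨one_quarter_le_of_strictAntiOn, strictAntiOn_one_sub_rpow_mul_K⟩,
    ⟨nonpos_of_strictMonoOn, strictMonoOn_one_sub_rpow_mul_K⟩⟩
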